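/- The real Lie algebras aff(ℝ) ⊕ aff(ℝ) and g₄² are not isomorphic, but their complexifications ℂ ⊗_ℝ (aff(ℝ) ⊕ aff(ℝ)) and ℂ ⊗_ℝ g₄² are isomorphic as complex Lie algebras. -/

import Mathlib

/-!
Over `ℝ`, `aff(ℝ) ⊕ aff(ℝ)` has a one-dimensional ideal (spanned by the `U` of either summand),
while `g₄²` has none: a line ideal is spanned by a common eigenvector of all `ad y`, and
`ad X₃` rotates the plane `⟨X₁, X₂⟩` without real eigenvalues and kills `X₃, X₄`, so such a
vector lies in `⟨X₃, X₄⟩`; but `ad X₁` maps `⟨X₃, X₄⟩` injectively into `⟨X₁, X₂⟩`.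

Over a field containing `z` with `z² = -1` the rotation diagonalises: `X₁ - z X₂` is an eigenvector
of `ad X₃` with eigenvalue `-z`, and `X₄` acts on it as the identity. So `(X₄ + z X₃) / 2` and
`X₁ - z X₂`, together with their images under `z ↦ -z`, form a basis with the relations of
`aff ⊕ aff`.
-/

open Module
open scoped TensorProduct

/-- Structure constants of the 4-dimensional real rigid Lie algebra `g₄²`
(for basis indices `i < j`): `[X₁,X₃] = X₂`, `[X₃,X₂] = X₁`, `[X₄,X₁] = X₁`, `[X₄,X₂] = X₂`
(in 1-indexed notation), all other brackets zero. -/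
def c42 (i j : Fin 4) : Fin 4 → ℝ :=
  if (i, j) = (0, 2) then ![0, 1, 0, 0]
  else if (i, j) = (1, 2) then ![-1, 0, 0, 0]
  else if (i, j) = (0, 3) then ![-1, 0, 0, 0]
  else if (i, j) = (1, 3) then ![0, -1, 0, 0]
  else 0

section

variable {R L L' ι : Type*} [CommRing R] [LieRing L] [LieAlgebra R L] [LieRing L']
  [LieAlgebra R L']

noncomputable def Module.Basis.lieEquiv (b : Basis ι R L) (b' : Basis ι R L')
    (h : ∀ i j, b.equiv b' (Equiv.refl ι) ⁅b i, b j⁆ = ⁅b' i, b' j⁆) : L ≃ₗ⁅R⁆ L' :=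
  { b.equiv b' (Equiv.refl ι) with
    map_lie' := fun {x y} => by
      have key : (LieAlgebra.ad R L : L →ₗ[R] Module.End R L).compr₂
          (b.equiv b' (Equiv.refl ι) : L →ₗ[R] L') =
          (LieAlgebra.ad R L' : L' →ₗ[R] Module.End R L').compl₁₂
          (b.equiv b' (Equiv.refl ι) : L →ₗ[R] L') (b.equiv b' (Equiv.refl ι) : L →ₗ[R] L') :=
        LinearMap.ext_basis b b fun i j => by simpa using h i j
      simpa using LinearMap.congr_fun₂ key x y }

variable (R L) in
def HasLineIdeal : Prop := ∃ x : L, x ≠ 0 ∧ ∀ y : L, ∃ t : R, ⁅y, x⁆ = t • x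

theorem HasLineIdeal.of_lieEquiv (e : L ≃ₗ⁅R⁆ L') (h : HasLineIdeal R L) :
    HasLineIdeal R L' := by
  obtain ⟨x, hx, hxy⟩ := h
  refine ⟨e x, by simpa using hx, fun y => ?_⟩
  obtain ⟨t, ht⟩ := hxy (e.symm y)
  exact ⟨t, by simpa [LieEquiv.map_lie] using congr(e $ht)⟩

-- `b (c, false)` and `b (c, true)` are `T` and `U` of the `c`-th copy of `aff`.
structure IsAffSumFamily (b : Bool × Bool → L) : Prop where
  lie_eq : ∀ c : Bool, ⁅b (c, false), b (c, true)⁆ = b (c, true)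
  lie_eq_zero_of_ne : ∀ (c c' : Bool) (x y : Bool), c ≠ c' → ⁅b (c, x), b (c', y)⁆ = 0

-- `b i` is `X_{i+1}` in the notation of `c42`.
structure IsG42Family (b : Fin 4 → L) : Prop where
  lie01 : ⁅b 0, b 1⁆ = 0
  lie02 : ⁅b 0, b 2⁆ = b 1
  lie12 : ⁅b 1, b 2⁆ = -b 0
  lie03 : ⁅b 0, b 3⁆ = -b 0
  lie13 : ⁅b 1, b 3⁆ = -b 1
  lie23 : ⁅b 2, b 3⁆ = 0

namespace IsAffSumFamily

theorem lie_eq_neg {b : Bool × Bool → L} (hb : IsAffSumFamily b) (c : Bool) :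
    ⁅b (c, true), b (c, false)⁆ = -b (c, true) := by
  rw [← lie_skew, hb.lie_eq]

theorem baseChange (A : Type*) [CommRing A] [Algebra R A] {b : Basis (Bool × Bool) R L}
    (hb : IsAffSumFamily b) : IsAffSumFamily (b.baseChange A) := by
  rw [show ⇑(b.baseChange A) = fun p => 1 ⊗ₜ b p from funext (b.baseChange_apply A)]
  constructor
  · intro c
    rw [LieAlgebra.ExtendScalars.bracket_tmul, one_mul, hb.lie_eq]
  · intro c c' x y h
    rw [LieAlgebra.ExtendScalars.bracket_tmul, hb.lie_eq_zero_of_ne c c' x y h,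
      TensorProduct.tmul_zero]

noncomputable def lieEquiv {b : Basis (Bool × Bool) R L} {b' : Basis (Bool × Bool) R L'}
    (hb : IsAffSumFamily b) (hb' : IsAffSumFamily b') : L ≃ₗ⁅R⁆ L' :=
  b.lieEquiv b' <| by
    rintro ⟨c, x⟩ ⟨c', y⟩
    obtain rfl | hc := eq_or_ne c c'
    · cases x <;> cases y <;> simp [hb.lie_eq, hb'.lie_eq, hb.lie_eq_neg, hb'.lie_eq_neg]
    · simp [hb.lie_eq_zero_of_ne c c' x y hc, hb'.lie_eq_zero_of_ne c c' x y hc]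

theorem hasLineIdeal [Nontrivial R] {b : Basis (Bool × Bool) R L} (hb : IsAffSumFamily b) :
    HasLineIdeal R L := by
  refine ⟨b (false, true), b.ne_zero _, fun y => ⟨b.repr y (false, false), ?_⟩⟩
  nth_rewrite 1 [← b.sum_repr y]
  simp only [Fintype.sum_prod_type, Fintype.sum_bool, add_lie, smul_lie, hb.lie_eq, lie_self,
    hb.lie_eq_zero_of_ne true false _ _ (by decide)]
  simp

end IsAffSumFamily

namespace IsG42Family

theorem of_c42 {m : Type*} [LieRing m] [LieAlgebra ℝ m] {b : Fin 4 → m}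
    (h : ∀ i j : Fin 4, i < j → ⁅b i, b j⁆ = ∑ k, c42 i j k • b k) : IsG42Family b where
  lie01 := by simpa [c42, Fin.sum_univ_four] using h 0 1 (by decide)
  lie02 := by simpa [c42, Fin.sum_univ_four] using h 0 2 (by decide)
  lie12 := by simpa [c42, Fin.sum_univ_four] using h 1 2 (by decide)
  lie03 := by simpa [c42, Fin.sum_univ_four] using h 0 3 (by decide)
  lie13 := by simpa [c42, Fin.sum_univ_four] using h 1 3 (by decide)
  lie23 := by simpa [c42, Fin.sum_univ_four] using h 2 3 (by decide)

theorem baseChange (A : Type*) [CommRing A] [Algebra R A] {b : Basis (Fin 4) R L}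
    (hb : IsG42Family b) : IsG42Family (b.baseChange A) := by
  rw [show ⇑(b.baseChange A) = fun i => 1 ⊗ₜ b i from funext (b.baseChange_apply A)]
  constructor <;> rw [LieAlgebra.ExtendScalars.bracket_tmul]
  · rw [hb.lie01, TensorProduct.tmul_zero]
  · rw [hb.lie02, one_mul]
  · rw [hb.lie12, one_mul, TensorProduct.tmul_neg]
  · rw [hb.lie03, one_mul, TensorProduct.tmul_neg]
  · rw [hb.lie13, one_mul, TensorProduct.tmul_neg]
  · rw [hb.lie23, TensorProduct.tmul_zero]

variable {b : Fin 4 → L} (hb : IsG42Family b)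
include hb

theorem lie20 : ⁅b 2, b 0⁆ = -b 1 := by rw [← lie_skew, hb.lie02]
theorem lie21 : ⁅b 2, b 1⁆ = b 0 := by rw [← lie_skew, hb.lie12, neg_neg]
theorem lie30 : ⁅b 3, b 0⁆ = b 0 := by rw [← lie_skew, hb.lie03, neg_neg]
theorem lie31 : ⁅b 3, b 1⁆ = b 1 := by rw [← lie_skew, hb.lie13, neg_neg]

end IsG42Family

theorem IsG42Family.not_hasLineIdeal {K : Type*} [Field K] [LinearOrder K]
    [IsStrictOrderedRing K] [LieAlgebra K L] {b : Basis (Fin 4) K L} (hb : IsG42Family b) :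
    ¬ HasLineIdeal K L := by
  rintro ⟨x, hx, hxy⟩
  set r := b.repr x
  have hxr : x = ∑ k, r k • b k := (b.sum_repr x).symm
  have coords {c d : Fin 4 → K} (h : ∑ k, c k • b k = ∑ k, d k • b k) : c = d := by
    simpa only [b.repr_sum_self] using congr(⇑(b.repr $h))
  have smul_x (t : K) : t • x = ∑ k, (t * r k) • b k := by
    simp only [hxr, Finset.smul_sum, smul_smul]
  have lie2x : ⁅b 2, x⁆ = ∑ k, ![r 1, -r 0, 0, 0] k • b k := by
    rw [hxr]
    simp only [Fin.sum_univ_four, lie_add, lie_smul, hb.lie20, hb.lie21, lie_self, hb.lie23,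
      Matrix.cons_val]
    module
  have lie0x : ⁅b 0, x⁆ = ∑ k, ![-r 3, r 2, 0, 0] k • b k := by
    rw [hxr]
    simp only [Fin.sum_univ_four, lie_add, lie_smul, hb.lie01, hb.lie02, lie_self, hb.lie03,
      Matrix.cons_val]
    module
  obtain ⟨s, hs⟩ := hxy (b 2)
  obtain ⟨t, ht⟩ := hxy (b 0)
  have hs' := coords ((lie2x.symm.trans hs).trans (smul_x s))
  have ht' := coords ((lie0x.symm.trans ht).trans (smul_x t))
  have e0 : r 1 = s * r 0 := congrFun hs' 0
  have e1 : -r 0 = s * r 1 := congrFun hs' 1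
  have f0 : -r 3 = t * r 0 := congrFun ht' 0
  have f1 : r 2 = t * r 1 := congrFun ht' 1
  have hr0 : r 0 = 0 := by
    have h : r 0 * (1 + s ^ 2) = 0 := by linear_combination -e1 - s * e0
    exact (mul_eq_zero.mp h).resolve_right (by positivity)
  have hr1 : r 1 = 0 := by rw [e0, hr0, mul_zero]
  apply hx
  rw [hxr, Fin.sum_univ_four, hr0, hr1, neg_eq_zero.mp (f0.trans (by rw [hr0, mul_zero])),
    f1, hr1]
  simp

variable {K : Type*} [Field K] [LieAlgebra K L]

def g42Cartan (b : Fin 4 → L) (z : K) : L := (2⁻¹ : K) • (b 3 + z • b 2)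

def g42Root (b : Fin 4 → L) (z : K) : L := b 0 - z • b 1

def g42AffSumFamily (b : Fin 4 → L) (z : K) (p : Bool × Bool) : L :=
  (if p.2 then g42Root b else g42Cartan b) (if p.1 then -z else z)

theorem top_le_span_range_g42AffSumFamily [NeZero (2 : K)] (b : Basis (Fin 4) K L) {z : K}
    (hz : z * z = -1) : ⊤ ≤ Submodule.span K (Set.range (g42AffSumFamily b z)) := by
  set V := Submodule.span K (Set.range (g42AffSumFamily b z))
  have mem (p : Bool × Bool) : g42AffSumFamily b z p ∈ V := Submodule.subset_span ⟨p, rfl⟩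
  have hz0 : z ≠ 0 := by rintro rfl; simp at hz
  have h0 : b 0 ∈ V := by
    rw [← Submodule.smul_mem_iff V (two_ne_zero (α := K))]
    convert V.add_mem (mem (false, true)) (mem (true, true)) using 1
    simp only [g42AffSumFamily, Bool.false_eq_true, ↓reduceIte, g42Root]
    module
  have h1 : b 1 ∈ V := by
    rw [← Submodule.smul_mem_iff V (mul_ne_zero two_ne_zero hz0)]
    convert V.sub_mem (mem (true, true)) (mem (false, true)) using 1
    simp only [g42AffSumFamily, Bool.false_eq_true, ↓reduceIte, g42Root]
    module
  have h2 : b 2 ∈ V := by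
    rw [← Submodule.smul_mem_iff V hz0]
    convert V.sub_mem (mem (false, false)) (mem (true, false)) using 1
    simp only [g42AffSumFamily, Bool.false_eq_true, ↓reduceIte, g42Cartan]
    match_scalars <;> field_simp <;> ring
  have h3 : b 3 ∈ V := by
    convert V.add_mem (mem (false, false)) (mem (true, false)) using 1
    simp only [g42AffSumFamily, Bool.false_eq_true, ↓reduceIte, g42Cartan]
    match_scalars <;> field_simp <;> ring
  rw [← b.span_eq, Submodule.span_le]
  rintro _ ⟨k, rfl⟩
  fin_cases k
  exacts [h0, h1, h2, h3]

namespace IsG42Family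

variable {b : Fin 4 → L} (hb : IsG42Family b)
include hb

theorem lie_root_root (z w : K) : ⁅g42Root b z, g42Root b w⁆ = 0 := by
  simp only [g42Root, sub_lie, lie_sub, smul_lie, lie_smul, lie_self, hb.lie01,
    ← lie_skew (b 1) (b 0)]
  simp

theorem lie_cartan_cartan (z w : K) : ⁅g42Cartan b z, g42Cartan b w⁆ = 0 := by
  simp only [g42Cartan, add_lie, lie_add, smul_lie, lie_smul, lie_self, hb.lie23,
    ← lie_skew (b 3) (b 2)]
  simp

theorem lie_cartan_root {z w : K} (hw : w * w = -1) :
    ⁅g42Cartan b z, g42Root b w⁆ = (2⁻¹ * (1 - z * w)) • g42Root b w := by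
  simp only [g42Cartan, g42Root, add_lie, lie_sub, smul_lie, lie_smul, hb.lie20, hb.lie21,
    hb.lie30, hb.lie31]
  linear_combination (norm := module) (-(2⁻¹ : K) * z * hw) • b 1

theorem isAffSumFamily [NeZero (2 : K)] {z : K} (hz : z * z = -1) :
    IsAffSumFamily (g42AffSumFamily b z) where
  lie_eq c := by
    set w : K := if c then -z else z
    have hw : w * w = -1 := by cases c <;> simp [w, hz]
    simp only [g42AffSumFamily, Bool.false_eq_true, if_false, if_true]
    rw [hb.lie_cartan_root hw, hw, sub_neg_eq_add, one_add_one_eq_two,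
      inv_mul_cancel₀ two_ne_zero, one_smul]
  lie_eq_zero_of_ne c c' x y h := by
    set w : K := if c then -z else z
    have hw : w * w = -1 := by cases c <;> simp [w, hz]
    have hw' : (if c' then -z else z) = -w := by cases c <;> cases c' <;> simp_all [w]
    simp only [g42AffSumFamily, hw']
    cases x <;> cases y <;> simp only [Bool.false_eq_true, if_false, if_true]
    · exact hb.lie_cartan_cartan _ _
    · rw [hb.lie_cartan_root (by rw [neg_mul_neg, hw]), mul_neg, sub_neg_eq_add, hw,
        add_neg_cancel, mul_zero, zero_smul]
    · rw [← lie_skew, hb.lie_cartan_root hw, neg_mul, sub_neg_eq_add, hw, add_neg_cancel,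
        mul_zero, zero_smul, neg_zero]
    · exact hb.lie_root_root _ _

end IsG42Family

theorem IsG42Family.exists_basis_isAffSumFamily [NeZero (2 : K)] {b : Basis (Fin 4) K L}
    (hb : IsG42Family b) {z : K} (hz : z * z = -1) :
    ∃ b' : Basis (Bool × Bool) K L, IsAffSumFamily b' :=
  ⟨basisOfTopLeSpanOfCardEqFinrank _ (top_le_span_range_g42AffSumFamily b hz)
      (by simp [finrank_eq_card_basis b]),
    by simpa using hb.isAffSumFamily hz⟩

end

theorem aff_sum_vs_g42 {a : Type} [LieRing a] [LieAlgebra ℝ a]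
    (ba : Basis (Bool × Bool) ℝ a)
    (ha1 : ∀ c : Bool, ⁅ba (c, false), ba (c, true)⁆ = ba (c, true))
    (ha2 : ∀ (c c' : Bool) (x y : Bool), c ≠ c' → ⁅ba (c, x), ba (c', y)⁆ = 0)
    {m : Type} [LieRing m] [LieAlgebra ℝ m] (bm : Basis (Fin 4) ℝ m)
    (hm : ∀ i j : Fin 4, i < j → ⁅bm i, bm j⁆ = ∑ k, c42 i j k • bm k) :
    IsEmpty (a ≃ₗ⁅ℝ⁆ m) ∧ Nonempty ((ℂ ⊗[ℝ] a) ≃ₗ⁅ℂ⁆ (ℂ ⊗[ℝ] m)) := by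
  have ha : IsAffSumFamily ba := ⟨ha1, ha2⟩
  have hg : IsG42Family bm := .of_c42 hm
  refine ⟨⟨fun e => hg.not_hasLineIdeal (ha.hasLineIdeal.of_lieEquiv e)⟩, ?_⟩
  obtain ⟨b', hb'⟩ := (hg.baseChange ℂ).exists_basis_isAffSumFamily Complex.I_mul_I
  exact ⟨(ha.baseChange ℂ).lieEquiv hb'⟩
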